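/- arXiv:1811.02455 — 2 statements merged into one kernel-verified Lean document; each statement's English description precedes it below -/
import Mathlib

section
/- For a prime p, the set Q_p = {(i, i² mod p) : 0 ≤ i < p} of points in the integer plane is in general position, i.e., no three distinct points of Q_p are collinear. -/
/-- For a prime `p`, the set `Q_p = {(i, i² mod p) : 0 ≤ i < p}` in `ℤ²` is in
general position: no three distinct points are collinear. -/
theorem qp_general_position (p : ℕ) (hp : p.Prime)
    (a b c : ℕ) (ha : a < p) (hb : b < p) (hc : c < p)
    (hab : a ≠ b) (hac : a ≠ c) (hbc : b ≠ c) :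
    ((b : ℤ) - (a : ℤ)) * (((c ^ 2 % p : ℕ) : ℤ) - ((a ^ 2 % p : ℕ) : ℤ)) -
      ((c : ℤ) - (a : ℤ)) * (((b ^ 2 % p : ℕ) : ℤ) - ((a ^ 2 % p : ℕ) : ℤ)) ≠ 0 := by
  have hfact : Fact p.Prime := ⟨hp⟩
  intro h
  have h2 : ((((b : ℤ) - (a : ℤ)) * (((c ^ 2 % p : ℕ) : ℤ) - ((a ^ 2 % p : ℕ) : ℤ)) -
      ((c : ℤ) - (a : ℤ)) * (((b ^ 2 % p : ℕ) : ℤ) - ((a ^ 2 % p : ℕ) : ℤ)) : ℤ) : ZMod p) = 0 := by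
    rw [h]; simp
  push_cast [ZMod.natCast_mod] at h2
  have h3 : ((b : ZMod p) - a) * ((c : ZMod p) - a) * ((c : ZMod p) - b) = 0 := by
    ring_nf
    ring_nf at h2
    linear_combination h2
  have inj : ∀ x y : ℕ, x < p → y < p → (x : ZMod p) = (y : ZMod p) → x = y := by
    intro x y hx hy hxy
    have := congrArg ZMod.val hxy
    rwa [ZMod.val_natCast_of_lt hx, ZMod.val_natCast_of_lt hy] at this
  rcases mul_eq_zero.mp h3 with h4 | h4
  · rcases mul_eq_zero.mp h4 with h5 | h5
    · exact hab (inj a b ha hb (sub_eq_zero.mp h5).symm)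
    · exact hac (inj a c ha hc (sub_eq_zero.mp h5).symm)
  · exact hbc (inj b c hb hc (sub_eq_zero.mp h4).symm)
end

section
/- Any bijection of a planar point set in general position onto another with the same labeled order type preserves, for every point p, the clockwise cyclic order by angle of the remaining points around p; consequently, if one labeled order type of n points is realizable, then at least (n−1)! distinct labeled order types are realizable by relabeling the same point set. -/
/-!
Let `o` be the lexicographically smallest point. Every other point lies in the half-plane
lexicographically above `o`, which spans an angle of at most `π` around `o`, so positive
orientation `(o, a, b)` is a strict linear order on the other points (with `o` put first).
A relabeling with the same orientations that fixes `o` is an automorphism of this finite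
linear order, hence the identity. So two labelings with the same labeled order type and the
same label on `o` coincide: each order type comes from at most `n` of the `n!` labelings.
-/

open Equiv Finset

theorem RelIso.eq_refl_of_finite {α : Type*} [Finite α] {r : α → α → Prop}
    [IsStrictTotalOrder α r] (f : r ≃r r) : f = RelIso.refl r := by
  have : IsWellOrder α r := { wf := Finite.wellFounded_of_trans_of_irrefl r }
  ext a
  exact InitialSeg.eq f.toInitialSeg (InitialSeg.refl r) a

def orient (p q r : ℝ × ℝ) : ℝ :=
  (q.1 - p.1) * (r.2 - p.2) - (q.2 - p.2) * (r.1 - p.1)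

lemma orient_self_left (p q : ℝ × ℝ) : orient p p q = 0 := by
  unfold orient; ring

lemma orient_self_right (p q : ℝ × ℝ) : orient p q q = 0 := by
  unfold orient; ring

lemma orient_swap (p q r : ℝ × ℝ) : orient p r q = -orient p q r := by
  unfold orient; ring

lemma orient_pos_trans {p q r s : ℝ × ℝ} (hq : toLex p < toLex q) (hr : toLex p < toLex r)
    (hs : toLex p < toLex s) (hqr : 0 < orient p q r) (hrs : 0 < orient p r s) :
    0 < orient p q s := by
  simp only [Prod.Lex.toLex_lt_toLex] at hq hr hs
  obtain ⟨p1, p2⟩ := p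
  obtain ⟨q1, q2⟩ := q
  obtain ⟨r1, r2⟩ := r
  obtain ⟨s1, s2⟩ := s
  unfold orient at *
  dsimp only at *
  rcases hq with hq | ⟨rfl, hq⟩ <;> rcases hr with hr | ⟨rfl, hr⟩ <;>
    rcases hs with hs | ⟨rfl, hs⟩ <;>
    nlinarith [mul_pos hqr (sub_pos.2 hs), mul_pos hrs (sub_pos.2 hq)]

section Angular

variable {ι : Type*} (P : ι → ℝ × ℝ) (o : ι)

def AngularLT (a b : ι) : Prop :=
  (a = o ∧ b ≠ o) ∨ 0 < orient (P o) (P a) (P b)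

variable {P o}

lemma ne_of_orient_pos {a b : ι} (h : 0 < orient (P o) (P a) (P b)) : a ≠ o ∧ b ≠ o := by
  constructor <;> rintro rfl <;> simp [orient_self_left, orient_swap] at h

lemma isStrictTotalOrder_angularLT (hmin : ∀ a, a ≠ o → toLex (P o) < toLex (P a))
    (hgp : ∀ a b, a ≠ o → b ≠ o → a ≠ b → orient (P o) (P a) (P b) ≠ 0) :
    IsStrictTotalOrder ι (AngularLT P o) where
  irrefl a := by simp [AngularLT, orient_self_right]
  trans a b c := by
    rintro (⟨rfl, hb⟩ | hab) (⟨rfl, -⟩ | hbc)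
    · exact absurd rfl hb
    · exact .inl ⟨rfl, (ne_of_orient_pos hbc).2⟩
    · exact absurd rfl (ne_of_orient_pos hab).2
    · obtain ⟨ha, hb⟩ := ne_of_orient_pos hab
      have hc := (ne_of_orient_pos hbc).2
      exact .inr (orient_pos_trans (hmin a ha) (hmin b hb) (hmin c hc) hab hbc)
  trichotomous a b hab hba := by
    by_contra hne
    by_cases ha : a = o
    · exact hab (.inl ⟨ha, fun hb => hne (ha.trans hb.symm)⟩)
    by_cases hb : b = o
    · exact hba (.inl ⟨hb, ha⟩)
    rcases (hgp a b ha hb hne).lt_or_gt with h | h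
    · exact hba (.inr (by rw [orient_swap]; linarith))
    · exact hab (.inr h)

theorem Equiv.Perm.eq_one_of_orient_pos_iff [Finite ι]
    (hmin : ∀ a, a ≠ o → toLex (P o) < toLex (P a))
    (hgp : ∀ a b, a ≠ o → b ≠ o → a ≠ b → orient (P o) (P a) (P b) ≠ 0)
    {τ : Perm ι} (hτ : τ o = o)
    (h : ∀ a b c, 0 < orient (P (τ a)) (P (τ b)) (P (τ c)) ↔ 0 < orient (P a) (P b) (P c)) :
    τ = 1 := by
  have := isStrictTotalOrder_angularLT hmin hgp
  have ho (a : ι) : τ a = o ↔ a = o := τ.injective.eq_iff' hτ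
  let f : AngularLT P o ≃r AngularLT P o :=
    ⟨τ, fun {a b} => by rw [AngularLT, AngularLT, ← h o a b, hτ]; simp only [ne_eq, ho]⟩
  ext a
  exact congrArg (· a) (RelIso.eq_refl_of_finite f)

end Angular

section OrderType

variable {ι : Type*} (P : ι → ℝ × ℝ)

noncomputable def orientationType (σ : Perm ι) (i j k : ι) : Bool :=
  decide (0 < orient (P (σ i)) (P (σ j)) (P (σ k)))

variable {P} {o : ι}

theorem eq_of_orientationType_eq [Finite ι]
    (hmin : ∀ a, a ≠ o → toLex (P o) < toLex (P a))
    (hgp : ∀ a b, a ≠ o → b ≠ o → a ≠ b → orient (P o) (P a) (P b) ≠ 0)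
    {σ σ' : Perm ι} (h : orientationType P σ = orientationType P σ') (ho : σ⁻¹ o = σ'⁻¹ o) :
    σ = σ' := by
  have hτ : (σ' * σ⁻¹) o = o := by rw [Perm.mul_apply, ho]; exact σ'.apply_symm_apply o
  have hpres (a b c : ι) : 0 < orient (P ((σ' * σ⁻¹) a)) (P ((σ' * σ⁻¹) b)) (P ((σ' * σ⁻¹) c))
      ↔ 0 < orient (P a) (P b) (P c) := by
    simpa [orientationType, Perm.mul_apply] using
      (congrFun (congrFun (congrFun h (σ⁻¹ a)) (σ⁻¹ b)) (σ⁻¹ c)).symm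
  exact (mul_inv_eq_one.1 (Perm.eq_one_of_orient_pos_iff hmin hgp hτ hpres)).symm

theorem card_perm_le_mul_card_image_orientationType [Fintype ι] [DecidableEq ι]
    (hmin : ∀ a, a ≠ o → toLex (P o) < toLex (P a))
    (hgp : ∀ a b, a ≠ o → b ≠ o → a ≠ b → orient (P o) (P a) (P b) ≠ 0) :
    (Fintype.card ι).factorial ≤ Fintype.card ι * #(univ.image (orientationType P)) := by
  rw [← Fintype.card_perm]
  refine card_le_mul_card_image _ _ fun t _ => ?_
  refine card_le_card_of_injOn (fun σ => σ⁻¹ o) (fun _ _ => mem_univ _) fun σ hσ σ' hσ' ho => ?_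
  simp only [coe_filter, mem_univ, true_and, Set.mem_ofPred_eq] at hσ hσ'
  exact eq_of_orientationType_eq hmin hgp (hσ.trans hσ'.symm) ho

end OrderType

/-- For a set of `n ≥ 3` points in general position in the plane, the `n!` relabelings
induce at least `(n−1)!` distinct labeled order types. -/
theorem relabelings_order_types (n : ℕ) (hn : 3 ≤ n) (P : Fin n → ℝ × ℝ)
    (hinj : Function.Injective P)
    (hgp : ∀ i j k : Fin n, i ≠ j → i ≠ k → j ≠ k →
      ((P j).1 - (P i).1) * ((P k).2 - (P i).2)
        - ((P j).2 - (P i).2) * ((P k).1 - (P i).1) ≠ 0) :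
    ((Finset.univ : Finset (Equiv.Perm (Fin n))).image
      (fun σ => fun i j k : Fin n =>
        decide (0 < ((P (σ j)).1 - (P (σ i)).1) * ((P (σ k)).2 - (P (σ i)).2)
          - ((P (σ j)).2 - (P (σ i)).2) * ((P (σ k)).1 - (P (σ i)).1)))).card
      ≥ Nat.factorial (n - 1) := by
  have : Nonempty (Fin n) := ⟨⟨0, by omega⟩⟩
  obtain ⟨o, ho⟩ := Finite.exists_min fun i => toLex (P i)
  have hmin (a : Fin n) (ha : a ≠ o) : toLex (P o) < toLex (P a) :=
    (ho a).lt_of_ne fun h => ha (hinj (toLex.injective h)).symm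
  have hcard := card_perm_le_mul_card_image_orientationType hmin
    fun a b ha hb hab => hgp o a b (Ne.symm ha) (Ne.symm hb) hab
  rw [Fintype.card_fin, ← Nat.mul_factorial_pred (by omega)] at hcard
  exact Nat.le_of_mul_le_mul_left hcard (by omega)
end
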